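/- (Lemma 2.1.) Let K ∈ ℕ and let v_i and v_j be two distinct nodes such that parent⁻¹(v_i) = {e_i} and parent⁻¹(v_j) = {e_j} for edges e_i ≠ e_j, such that for every index k one has e_i ∈ P_k if and only if e_j ∈ P_k, and such that Δw(e_i) < Δw(e_j). Suppose S ⊆ V is optimal for budget K, v_i ∈ S and v_j ∉ S. Then S* := (S \ {v_i}) ∪ {v_j} is also optimal for budget K, i.e., |S*| ≤ K and val(S*) = max{val(S') : S' ⊆ V, |S'| ≤ K}. -/

import Mathlib

/-- The shortest root-leaf distance of a node-upgrade instance after upgrading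
the node set `S`. -/
noncomputable def sval {V E : Type*} [DecidableEq V] {l : ℕ}
    (parent : E → V) (w u : E → ℝ) (P : Fin l → Finset E) (hl : 0 < l)
    (S : Finset V) : ℝ :=
  Finset.univ.inf' (Finset.univ_nonempty_iff.mpr ⟨⟨0, hl⟩⟩)
    fun k => ∑ e ∈ P k, if parent e ∈ S then u e else w e

/-- `S` is optimal for budget `K`: it respects the budget and its value is the
maximum value over all budget-respecting upgrade sets. -/
def IsOptimal {V E : Type*} [Fintype V] [DecidableEq V] {l : ℕ}
    (parent : E → V) (w u : E → ℝ) (P : Fin l → Finset E) (hl : 0 < l)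
    (K : ℕ) (S : Finset V) : Prop :=
  S.card ≤ K ∧ ∀ S' : Finset V, S'.card ≤ K →
    sval parent w u P hl S' ≤ sval parent w u P hl S

/-!
Since `v_i` and `v_j` each carry exactly one edge and these two edges lie on the same
root-leaf paths, moving the upgrade from `v_i` to `v_j` changes the length of a path
only if the path contains both edges, and then by `Δw(e_j) - Δw(e_i) > 0`. Hence no path
gets shorter, the value does not decrease, and the budget is not exceeded.
-/

open Finset

namespace Finset

theorem sum_le_sum_of_eq_off_pair {ι M : Type*} [AddCommMonoid M] [Preorder M]
    [IsOrderedAddMonoid M] {s : Finset ι} {f g : ι → M} {a b : ι} (hab : a ≠ b)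
    (hs : a ∈ s ↔ b ∈ s) (hfg : ∀ x, x ≠ a → x ≠ b → f x = g x)
    (hpair : f a + f b ≤ g a + g b) :
    ∑ x ∈ s, f x ≤ ∑ x ∈ s, g x := by
  classical
  have hrest : ∀ t : Finset ι, (∀ x ∈ t, x ≠ a ∧ x ≠ b) → ∑ x ∈ t, f x = ∑ x ∈ t, g x :=
    fun t ht => sum_congr rfl fun x hx => hfg x (ht x hx).1 (ht x hx).2
  by_cases ha : a ∈ s
  · have hsub : {a, b} ⊆ s := insert_subset ha (singleton_subset_iff.mpr (hs.mp ha))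
    rw [← sum_sdiff hsub, ← sum_sdiff hsub (f := g), sum_pair hab, sum_pair hab]
    refine add_le_add (le_of_eq (hrest _ fun x hx => ?_)) hpair
    simpa [not_or] using (mem_sdiff.mp hx).2
  · exact le_of_eq <| hrest s fun x hx =>
      ⟨fun h => ha (h ▸ hx), fun h => ha (hs.mpr (h ▸ hx))⟩

theorem card_sdiff_singleton_union_singleton_le {α : Type*} [DecidableEq α] {s : Finset α}
    {a : α} (ha : a ∈ s) (b : α) : #(s \ {a} ∪ {b}) ≤ #s :=
  calc #(s \ {a} ∪ {b}) ≤ #(s.erase a) + 1 := by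
        rw [sdiff_singleton_eq_erase]; exact (card_union_le _ _).trans (by simp)
    _ = #s := card_erase_add_one ha

end Finset

section NodeUpgrade

variable {V E : Type*} [DecidableEq V] (parent : E → V) (w u : E → ℝ)

def upgradedWeight (S : Finset V) (e : E) : ℝ :=
  if parent e ∈ S then u e else w e

theorem sval_le_sval_of_forall_sum_le {l : ℕ} (P : Fin l → Finset E) (hl : 0 < l)
    {S T : Finset V}
    (h : ∀ k, ∑ e ∈ P k, upgradedWeight parent w u S e ≤ ∑ e ∈ P k, upgradedWeight parent w u T e) :
    sval parent w u P hl S ≤ sval parent w u P hl T :=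
  le_inf' _ _ fun k _ => (inf'_le _ (mem_univ k)).trans (h k)

variable {parent w u}

theorem upgradedWeight_of_mem {S : Finset V} {e : E} (h : parent e ∈ S) :
    upgradedWeight parent w u S e = u e :=
  if_pos h

theorem upgradedWeight_of_notMem {S : Finset V} {e : E} (h : parent e ∉ S) :
    upgradedWeight parent w u S e = w e :=
  if_neg h

theorem upgradedWeight_congr {S T : Finset V} {e : E} (h : parent e ∈ S ↔ parent e ∈ T) :
    upgradedWeight parent w u S e = upgradedWeight parent w u T e := by
  simp only [upgradedWeight, h]

end NodeUpgrade

theorem stmt1_general {V E : Type*} [Fintype V] [DecidableEq V]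
    (parent : E → V) (w u : E → ℝ)
    {l : ℕ} (hl : 0 < l) (P : Fin l → Finset E) (K : ℕ)
    (vi vj : V) (hv : vi ≠ vj) (ei ej : E) (he : ei ≠ ej)
    (hpi : ∀ e, parent e = vi ↔ e = ei)
    (hpj : ∀ e, parent e = vj ↔ e = ej)
    (hP : ∀ k : Fin l, ei ∈ P k ↔ ej ∈ P k)
    (hdev : u ei - w ei < u ej - w ej)
    (S : Finset V) (hopt : IsOptimal parent w u P hl K S)
    (hiS : vi ∈ S) (hjS : vj ∉ S) :
    IsOptimal parent w u P hl K ((S \ {vi}) ∪ {vj}) := by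
  set T := S \ {vi} ∪ {vj}
  have hmemT : ∀ v, v ∈ T ↔ v ∈ S ∧ v ≠ vi ∨ v = vj := by simp [T, or_comm]
  have hoff : ∀ e, e ≠ ei → e ≠ ej →
      upgradedWeight parent w u S e = upgradedWeight parent w u T e := fun e hei hej => by
    have hi : parent e ≠ vi := fun h => hei ((hpi e).mp h)
    have hj : parent e ≠ vj := fun h => hej ((hpj e).mp h)
    exact upgradedWeight_congr (by simp [hmemT, hi, hj])
  have hpair : upgradedWeight parent w u S ei + upgradedWeight parent w u S ej ≤
      upgradedWeight parent w u T ei + upgradedWeight parent w u T ej := by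
    have hei : parent ei = vi := (hpi ei).mpr rfl
    have hej : parent ej = vj := (hpj ej).mpr rfl
    rw [upgradedWeight_of_mem (hei ▸ hiS), upgradedWeight_of_notMem (hej ▸ hjS),
      upgradedWeight_of_notMem (by simp [hei, hmemT, hv]),
      upgradedWeight_of_mem (by simp [hej, hmemT])]
    linarith
  refine ⟨(card_sdiff_singleton_union_singleton_le hiS vj).trans hopt.1, fun S' hS' => ?_⟩
  exact (hopt.2 S' hS').trans <| sval_le_sval_of_forall_sum_le parent w u P hl fun k =>
    sum_le_sum_of_eq_off_pair he (hP k) hoff hpair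

theorem stmt1 {V E : Type*} [Fintype V] [DecidableEq V] [Fintype E] [DecidableEq E]
    (parent : E → V) (w u : E → ℝ) (hwu : ∀ e, w e ≤ u e)
    {l : ℕ} (hl : 0 < l) (P : Fin l → Finset E) (K : ℕ)
    (vi vj : V) (hv : vi ≠ vj) (ei ej : E) (he : ei ≠ ej)
    (hpi : ∀ e, parent e = vi ↔ e = ei)
    (hpj : ∀ e, parent e = vj ↔ e = ej)
    (hP : ∀ k : Fin l, ei ∈ P k ↔ ej ∈ P k)
    (hdev : u ei - w ei < u ej - w ej)
    (S : Finset V) (hopt : IsOptimal parent w u P hl K S)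
    (hiS : vi ∈ S) (hjS : vj ∉ S) :
    IsOptimal parent w u P hl K ((S \ {vi}) ∪ {vj}) :=
  stmt1_general parent w u hl P K vi vj hv ei ej he hpi hpj hP hdev S hopt hiS hjS
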